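/- arXiv:1904.10938 — 3 statements merged into one kernel-verified Lean document; each statement's English description precedes it below -/
import Mathlib

section
/- Almost every sequence x ∈ [0,1]^ℕ with respect to the product Lebesgue measure m^∞ is uniquely determined within a full-measure set by the family of relations {(n,m) : x_n < x_m}; that is, there is a measurable set A ⊆ [0,1]^ℕ of full measure such that for any two distinct x, x' ∈ A there exist indices i, j with x_i > x_j but x'_i < x'_j. -/
open MeasureTheory Filter
open scoped Classical unitInterval

/-- `μ` is the product of the measures `ν i`: every measurable cylinder set has
the product measure. -/
def IsProductMeasure {ι : Type*} {α : ι → Type*} [∀ i, MeasurableSpace (α i)]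
    (ν : ∀ i, Measure (α i)) (μ : Measure (∀ i, α i)) : Prop :=
  ∀ (s : Finset ι) (t : ∀ i, Set (α i)), (∀ i, MeasurableSet (t i)) →
    μ {x | ∀ i ∈ s, x i ∈ t i} = ∏ i ∈ s, ν i (t i)

open Finset ProbabilityTheory Topology in
/-- Distinguishability: there is a full-measure set on which points of `[0,1]^ℕ`
are separated by the pairwise order relations of their coordinates. -/
theorem stmt_2 (m : Measure (ℕ → I))
    (hm : IsProductMeasure (fun _ : ℕ => (volume : Measure I)) m) :
    ∃ A : Set (ℕ → I), MeasurableSet A ∧ m Aᶜ = 0 ∧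
      ∀ x ∈ A, ∀ x' ∈ A, x ≠ x' →
        ∃ i j : ℕ, (x j : ℝ) < x i ∧ (x' i : ℝ) < x' j := by
  classical
  -- single-coordinate marginals
  have hsingle : ∀ (i : ℕ) (t : Set I), MeasurableSet t → m {x | x i ∈ t} = volume t := by
    intro i t ht
    have := hm {i} (fun _ => t) (fun _ => ht)
    simpa using this
  haveI hprob : IsProbabilityMeasure m :=
    ⟨by simpa using hm ∅ (fun _ => Set.univ) fun _ => MeasurableSet.univ⟩
  -- coordinates are independent
  have hind : iIndepFun (fun i (x : ℕ → I) => x i) m := by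
    rw [iIndepFun_iff_measure_inter_preimage_eq_mul]
    intro S sets H
    have ht : ∀ i, MeasurableSet (if h : i ∈ S then sets i else Set.univ) := by
      intro i
      split
      · exact H _ ‹_›
      · exact .univ
    have hcyl := hm S (fun i => if h : i ∈ S then sets i else Set.univ) ht
    have e1 : {x : ℕ → I | ∀ i ∈ S, x i ∈ if h : i ∈ S then sets i else Set.univ}
        = ⋂ i ∈ S, (fun x : ℕ → I => x i) ⁻¹' sets i := by
      ext x
      simp only [Set.mem_setOf_eq, Set.mem_iInter, Set.mem_preimage]
      exact ⟨fun h i hi => by simpa [dif_pos hi] using h i hi,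
        fun h i hi => by simpa [dif_pos hi] using h i hi⟩
    rw [e1] at hcyl
    rw [hcyl]
    refine Finset.prod_congr rfl fun i hi => ?_
    simp only [dif_pos hi]
    exact (hsingle i _ (H i hi)).symm
  -- marginal distributions are uniform
  have hmap : ∀ i, m.map (fun x : ℕ → I => x i) = (volume : Measure I) := by
    intro i
    refine Measure.ext fun t ht => ?_
    rw [Measure.map_apply (measurable_pi_apply i) ht]
    exact hsingle i t ht
  -- basic measurable sets
  have hS : ∀ (q : ℝ) (i : ℕ), MeasurableSet {x : ℕ → I | (x i : ℝ) < q} := fun q i =>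
    measurableSet_lt (measurable_subtype_coe.comp (measurable_pi_apply i)) measurable_const
  -- volume of an initial segment in I
  have hq : ∀ q : ℚ, 0 < q → q < 1 →
      (volume : Measure I) {y : I | (y : ℝ) < (q:ℝ)} = ENNReal.ofReal q := by
    intro q h0 h1
    rw [unitInterval.volume_def,
      (MeasurableEmbedding.subtype_coe measurableSet_Icc).comap_apply]
    have : Subtype.val '' {y : I | (y : ℝ) < (q:ℝ)} = Set.Ico (0:ℝ) q := by
      ext y
      constructor
      · rintro ⟨⟨z, hz⟩, h, rfl⟩; exact ⟨hz.1, h⟩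
      · intro hy
        exact ⟨⟨y, hy.1, hy.2.le.trans (by exact_mod_cast h1.le)⟩, hy.2, rfl⟩
    rw [this, Real.volume_Ico, sub_zero]
  -- no atoms: diagonal is null
  have hatom : ∀ a : I, (volume : Measure I) {a} = 0 := by
    intro a
    rw [unitInterval.volume_def,
      (MeasurableEmbedding.subtype_coe measurableSet_Icc).comap_apply]
    simp [Set.image_singleton]
  have hdiag : ∀ i j : ℕ, i ≠ j → m {x : ℕ → I | x i = x j} = 0 := by
    intro i j hij
    have hpair : IndepFun (fun x : ℕ → I => x i) (fun x : ℕ → I => x j) m :=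
      hind.indepFun hij
    have hmapped : m.map (fun x : ℕ → I => (x i, x j))
        = ((volume : Measure I)).prod (volume : Measure I) := by
      have := (indepFun_iff_map_prod_eq_prod_map_map
        (measurable_pi_apply i).aemeasurable (measurable_pi_apply j).aemeasurable).1 hpair
      rw [this, hmap i, hmap j]
    have hdm : MeasurableSet {p : I × I | p.1 = p.2} := by
      have : {p : I × I | p.1 = p.2} = {p : I × I | (p.1 : ℝ) = (p.2 : ℝ)} := by
        ext p; simp [Subtype.ext_iff]
      rw [this]
      exact measurableSet_eq_fun (measurable_subtype_coe.comp measurable_fst)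
        (measurable_subtype_coe.comp measurable_snd)
    have : m {x : ℕ → I | x i = x j}
        = (m.map (fun x : ℕ → I => (x i, x j))) {p : I × I | p.1 = p.2} := by
      rw [Measure.map_apply ((measurable_pi_apply i).prodMk (measurable_pi_apply j)) hdm]
      rfl
    rw [this, hmapped, Measure.prod_apply hdm]
    have : ∀ a : I, (volume : Measure I) (Prod.mk a ⁻¹' {p : I × I | p.1 = p.2}) = 0 := by
      intro a
      have : (Prod.mk a ⁻¹' {p : I × I | p.1 = p.2}) = {a} := by
        ext b; simp [eq_comm]
      rw [this]
      exact hatom a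
    simp [this, hatom]
  -- the strong law of large numbers for each rational level
  have hLLN : ∀ q : ℚ, 0 < q → q < 1 →
      ∀ᵐ x ∂m, Tendsto
        (fun n => ((((range n).filter fun i => (x i : ℝ) < (q:ℝ)).card : ℝ)) / n)
        atTop (𝓝 (q:ℝ)) := by
    intro q h0 h1
    set X : ℕ → (ℕ → I) → ℝ := fun i x => if (x i : ℝ) < (q:ℝ) then 1 else 0 with hX
    have hgm : Measurable fun y : I => if (y : ℝ) < (q:ℝ) then (1:ℝ) else 0 :=
      Measurable.ite (measurableSet_lt measurable_subtype_coe measurable_const)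
        measurable_const measurable_const
    have hindX : iIndepFun X m :=
      hind.comp (fun _ y => if (y : ℝ) < (q:ℝ) then (1:ℝ) else 0) fun _ => hgm
    have hpairX : Pairwise (Function.onFun (IndepFun · · m) X) := fun i j hij => hindX.indepFun hij
    have hidX : ∀ i, IdentDistrib (X i) (X 0) m m := by
      intro i
      have hbase : IdentDistrib (fun x : ℕ → I => x i) (fun x : ℕ → I => x 0) m m :=
        ⟨(measurable_pi_apply i).aemeasurable, (measurable_pi_apply 0).aemeasurable,
          by rw [hmap i, hmap 0]⟩
      exact hbase.comp hgm
    have hXind : X 0 = Set.indicator {x : ℕ → I | (x 0 : ℝ) < (q:ℝ)} (fun _ => (1:ℝ)) := by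
      funext x; simp [hX, Set.indicator_apply]
    have hintX : Integrable (X 0) m := by
      rw [hXind]
      exact (integrable_const 1).indicator (hS _ 0)
    have hmean : m[X 0] = (q:ℝ) := by
      rw [hXind, integral_indicator_const _ (hS _ 0), smul_eq_mul, mul_one]
      have : m {x : ℕ → I | (x 0 : ℝ) < (q:ℝ)} = ENNReal.ofReal q :=
        (hsingle 0 {y : I | (y : ℝ) < (q:ℝ)}
          (measurableSet_lt measurable_subtype_coe measurable_const)).trans (hq q h0 h1)
      rw [measureReal_def, this, ENNReal.toReal_ofReal (by positivity)]
    have hsl := strong_law_ae_real X hintX hpairX hidX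
    rw [hmean] at hsl
    filter_upwards [hsl] with x hx
    have : (fun n => ((((range n).filter fun i => (x i : ℝ) < (q:ℝ)).card : ℝ)) / n)
        = fun n : ℕ => (∑ i ∈ range n, X i x) / n := by
      funext n
      congr 1
      rw [hX]
      exact (Finset.sum_boole _ _).symm
    rw [this]
    exact hx
  -- the full-measure set
  set A : Set (ℕ → I) :=
    {x | (∀ i j : ℕ, i ≠ j → x i ≠ x j) ∧ ∀ q : ℚ, 0 < q → q < 1 →
      Tendsto (fun n => ((((range n).filter fun i => (x i : ℝ) < (q:ℝ)).card : ℝ)) / n)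
        atTop (𝓝 (q:ℝ))} with hA
  refine ⟨A, ?_, ?_, ?_⟩
  · -- measurability
    have e : A = (⋂ i, ⋂ j, {x : ℕ → I | i ≠ j → x i ≠ x j}) ∩
        ⋂ q : ℚ, {x : ℕ → I | 0 < q → q < 1 →
          Tendsto (fun n => ((((range n).filter fun i => (x i : ℝ) < (q:ℝ)).card : ℝ)) / n)
            atTop (𝓝 (q:ℝ))} := by
      ext x; simp [hA]
    rw [e]
    apply MeasurableSet.inter
    · refine MeasurableSet.iInter fun i => MeasurableSet.iInter fun j => ?_
      by_cases hij : i = j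
      · subst hij
        have : {x : ℕ → I | i ≠ i → x i ≠ x i} = Set.univ := by
          ext x; simp
        rw [this]; exact .univ
      · have : {x : ℕ → I | i ≠ j → x i ≠ x j} = {x : ℕ → I | x i = x j}ᶜ := by
          ext x; simp [hij]
        rw [this]
        have h2 : {x : ℕ → I | x i = x j} = {x : ℕ → I | (x i : ℝ) = (x j : ℝ)} := by
          ext x; simp [Subtype.ext_iff]
        rw [h2]
        exact (measurableSet_eq_fun (measurable_subtype_coe.comp (measurable_pi_apply i))
          (measurable_subtype_coe.comp (measurable_pi_apply j))).compl
    · refine MeasurableSet.iInter fun q => ?_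
      by_cases h0 : 0 < q
      · by_cases h1 : q < 1
        · have e2 : {x : ℕ → I | 0 < q → q < 1 →
              Tendsto (fun n => ((((range n).filter fun i => (x i : ℝ) < (q:ℝ)).card : ℝ)) / n)
                atTop (𝓝 (q:ℝ))} = {x : ℕ → I |
              Tendsto (fun n => ((((range n).filter fun i => (x i : ℝ) < (q:ℝ)).card : ℝ)) / n)
                atTop (𝓝 (q:ℝ))} := by
            ext x; simp [h0, h1]
          rw [e2]
          refine measurableSet_tendsto _ fun n => ?_
          apply Measurable.div_const
          have : (fun x : ℕ → I => ((((range n).filter fun i => (x i : ℝ) < (q:ℝ)).card : ℝ)))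
              = fun x => ∑ i ∈ range n, if (x i : ℝ) < (q:ℝ) then (1:ℝ) else 0 := by
            funext x; rw [Finset.sum_boole]
          rw [this]
          exact Finset.measurable_sum _ fun i _ =>
            Measurable.ite (hS _ i) measurable_const measurable_const
        · have : {x : ℕ → I | 0 < q → q < 1 →
              Tendsto (fun n => ((((range n).filter fun i => (x i : ℝ) < (q:ℝ)).card : ℝ)) / n)
                atTop (𝓝 (q:ℝ))} = Set.univ := by
            ext x; simp [h1]
          rw [this]; exact .univ
      · have : {x : ℕ → I | 0 < q → q < 1 →
            Tendsto (fun n => ((((range n).filter fun i => (x i : ℝ) < (q:ℝ)).card : ℝ)) / n)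
              atTop (𝓝 (q:ℝ))} = Set.univ := by
          ext x; simp [h0]
        rw [this]; exact .univ
  · -- full measure
    have hae : ∀ᵐ x ∂m, x ∈ A := by
      have h1 : ∀ᵐ x ∂m, ∀ i j : ℕ, i ≠ j → x i ≠ x j := by
        rw [ae_all_iff]
        intro i
        rw [ae_all_iff]
        intro j
        by_cases hij : i = j
        · exact ae_of_all _ fun x h => absurd hij h
        · have : ∀ᵐ x ∂m, x i ≠ x j := by
            rw [ae_iff]
            simpa using hdiag i j hij
          exact this.mono fun x h _ => h
      have h2 : ∀ᵐ x ∂m, ∀ q : ℚ, 0 < q → q < 1 →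
          Tendsto (fun n => ((((range n).filter fun i => (x i : ℝ) < (q:ℝ)).card : ℝ)) / n)
            atTop (𝓝 (q:ℝ)) := by
        rw [ae_all_iff]
        intro q
        by_cases h0 : 0 < q
        · by_cases h1 : q < 1
          · exact (hLLN q h0 h1).mono fun x h _ _ => h
          · exact ae_of_all _ fun x _ hq1 => absurd hq1 h1
        · exact ae_of_all _ fun x hq0 => absurd hq0 h0
      filter_upwards [h1, h2] with x hx1 hx2
      exact ⟨hx1, hx2⟩
    rwa [ae_iff] at hae
  · -- distinguishability
    intro x hx x' hx' hne
    by_contra hcon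
    push_neg at hcon
    -- hcon : ∀ i j, (x j:ℝ) < x i → (x' j:ℝ) ≤ x' i  (after push_neg of ¬(· < ·))
    have hiff : ∀ i j : ℕ, ((x i : ℝ) < x j ↔ (x' i : ℝ) < x' j) := by
      intro i j
      constructor
      · intro hlt
        have hij : i ≠ j := fun e => lt_irrefl _ (e ▸ hlt)
        have hle : (x' i : ℝ) ≤ x' j := hcon j i hlt
        rcases hle.lt_or_eq with h' | h'
        · exact h'
        · exact absurd (Subtype.ext h') (hx'.1 i j hij)
      · intro hlt
        have hij : i ≠ j := fun e => lt_irrefl _ (e ▸ hlt)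
        rcases lt_trichotomy ((x i : ℝ)) ((x j : ℝ)) with h' | h' | h'
        · exact h'
        · exact absurd (Subtype.ext h') (hx.1 i j hij)
        · exact absurd (hcon i j h') (not_le.2 hlt)
    -- key: in A, the empirical counts converge to the coordinate value
    have hkey : ∀ y ∈ A, ∀ k : ℕ,
        Tendsto (fun n => ((((range n).filter fun i => (y i : ℝ) < y k).card : ℝ)) / n)
          atTop (𝓝 ((y k : ℝ))) := by
      rintro y ⟨-, hyP⟩ k
      rw [tendsto_order]
      constructor
      · intro l hl
        rcases lt_or_ge l 0 with hl0 | hl0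
        · exact Eventually.of_forall fun n => lt_of_lt_of_le hl0 (by positivity)
        · obtain ⟨q, hlq, hqk⟩ := exists_rat_btwn hl
          have hq0 : 0 < q := by exact_mod_cast lt_of_le_of_lt hl0 hlq
          have hq1 : q < 1 := by exact_mod_cast lt_of_lt_of_le hqk (y k).2.2
          have hT := hyP q hq0 hq1
          have hEv := (tendsto_order.1 hT).1 l hlq
          filter_upwards [hEv] with n hn
          refine lt_of_lt_of_le hn ?_
          gcongr
      · intro u hu
        rcases le_or_gt u 1 with hu1 | hu1
        · obtain ⟨q, hkq, hqu⟩ := exists_rat_btwn hu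
          have hq0 : 0 < q := by exact_mod_cast lt_of_le_of_lt (y k).2.1 hkq
          have hq1 : q < 1 := by exact_mod_cast lt_of_lt_of_le hqu hu1
          have hT := hyP q hq0 hq1
          have hEv := (tendsto_order.1 hT).2 u hqu
          filter_upwards [hEv] with n hn
          refine lt_of_le_of_lt ?_ hn
          gcongr
        · refine Eventually.of_forall fun n => lt_of_le_of_lt ?_ hu1
          refine div_le_one_of_le₀ ?_ (Nat.cast_nonneg n)
          have : ((range n).filter fun i => (y i : ℝ) < y k).card ≤ n := by
            calc ((range n).filter fun i => (y i : ℝ) < y k).card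
                ≤ (range n).card := Finset.card_filter_le _ _
              _ = n := Finset.card_range n
          exact_mod_cast this
    -- counts for x and x' coincide, hence coordinates coincide
    have hco : ∀ k : ℕ, x k = x' k := by
      intro k
      have hfe : ∀ n : ℕ, ((range n).filter fun i => (x i : ℝ) < x k)
          = ((range n).filter fun i => (x' i : ℝ) < x' k) := by
        intro n
        apply Finset.ext
        intro i
        simp only [Finset.mem_filter]
        exact and_congr_right fun _ => hiff i k
      have h1 := hkey x hx k
      have h2 := hkey x' hx' k
      have h3 : Tendsto (fun n => ((((range n).filter fun i => (x i : ℝ) < x k).card : ℝ)) / n)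
          atTop (𝓝 ((x' k : ℝ))) := by
        have e : (fun n : ℕ => ((((range n).filter fun i => (x i : ℝ) < x k).card : ℝ)) / n)
            = fun n => ((((range n).filter fun i => (x' i : ℝ) < x' k).card : ℝ)) / n := by
          funext n; rw [hfe n]
        rw [e]
        exact h2
      exact Subtype.ext (tendsto_nhds_unique h1 h3)
    exact hne (funext hco)
end

section
/- The symmetric group S_n is in bijection with the set of pairs (P, Q) of standard Young tableaux with n cells having the same shape; consequently, n! = Σ_{λ ⊢ n} (f^λ)², where f^λ is the number of standard Young tableaux of shape λ. -/
open scoped Classical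

/-- A standard Young tableau of shape `μ`: a bijective filling of the cells of `μ` by
`0,…,n-1` whose entries increase along rows and columns. -/
def SYT (μ : YoungDiagram) : Type :=
  {f : μ.cells → Fin μ.card //
    Function.Bijective f ∧
      ∀ a b : μ.cells, (a : ℕ × ℕ).1 ≤ (b : ℕ × ℕ).1 → (a : ℕ × ℕ).2 ≤ (b : ℕ × ℕ).2 →
        a ≠ b → f a < f b}

open YoungDiagram Finset

namespace RSKaux


/-- Removable corners of a Young diagram. -/
def corners (μ : YoungDiagram) : Finset (ℕ × ℕ) :=
  μ.cells.filter (fun c => (c.1 + 1, c.2) ∉ μ ∧ (c.1, c.2 + 1) ∉ μ)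

lemma mem_corners {μ : YoungDiagram} {c : ℕ × ℕ} :
    c ∈ corners μ ↔ c ∈ μ ∧ (c.1 + 1, c.2) ∉ μ ∧ (c.1, c.2 + 1) ∉ μ := by
  simp [corners, YoungDiagram.mem_cells]

lemma erase_lowerSet {μ : YoungDiagram} {c : ℕ × ℕ} (hc : c ∈ corners μ) :
    IsLowerSet ((μ.cells.erase c : Finset (ℕ × ℕ)) : Set (ℕ × ℕ)) := by
  rw [mem_corners] at hc
  intro x y hyx hx
  simp only [Finset.coe_erase, Set.mem_diff, Finset.mem_coe, YoungDiagram.mem_cells,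
    Set.mem_singleton_iff] at hx ⊢
  obtain ⟨hxμ, hxc⟩ := hx
  refine ⟨μ.isLowerSet hyx hxμ, ?_⟩
  rintro rfl
  -- x ≥ c, x ≠ c, x ∈ μ: contradiction with corner
  have hxμ' : (x.1, x.2) ∈ μ := by simpa using hxμ
  rcases Prod.le_def.mp hyx with ⟨h1, h2⟩
  rcases lt_or_eq_of_le h1 with h1 | h1
  · exact hc.2.1 (μ.up_left_mem h1 h2 hxμ')
  · rcases lt_or_eq_of_le h2 with h2 | h2
    · exact hc.2.2 (μ.up_left_mem h1.le h2 hxμ')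
    · exact hxc (Prod.ext_iff.mpr ⟨h1.symm, h2.symm⟩)

/-- Erase a corner cell (junk value `μ` if not a corner). -/
noncomputable def eraseY (μ : YoungDiagram) (c : ℕ × ℕ) : YoungDiagram :=
  if hc : c ∈ corners μ then ⟨μ.cells.erase c, erase_lowerSet hc⟩ else μ

lemma mem_eraseY {μ : YoungDiagram} {c : ℕ × ℕ} (hc : c ∈ corners μ) {x : ℕ × ℕ} :
    x ∈ eraseY μ c ↔ x ∈ μ ∧ x ≠ c := by
  rw [eraseY, dif_pos hc]
  change x ∈ μ.cells.erase c ↔ _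
  rw [Finset.mem_erase, YoungDiagram.mem_cells]
  tauto

lemma cells_eraseY {μ : YoungDiagram} {c : ℕ × ℕ} (hc : c ∈ corners μ) :
    (eraseY μ c).cells = μ.cells.erase c := by
  rw [eraseY, dif_pos hc]

lemma card_eraseY {μ : YoungDiagram} {c : ℕ × ℕ} (hc : c ∈ corners μ) :
    (eraseY μ c).card = μ.card - 1 := by
  show (eraseY μ c).cells.card = _
  rw [cells_eraseY hc,
    Finset.card_erase_of_mem ((μ.mem_cells c).mpr (mem_corners.mp hc).1)]

lemma card_pos_of_corner {μ : YoungDiagram} {c : ℕ × ℕ} (hc : c ∈ corners μ) :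
    0 < μ.card :=
  Finset.card_pos.mpr ⟨c, (mem_corners.mp hc).1⟩

/-- `c` can be added to `μ` to give a Young diagram. -/
def IsAddable (μ : YoungDiagram) (c : ℕ × ℕ) : Prop :=
  c ∉ μ ∧ IsLowerSet (insert c (μ : Set (ℕ × ℕ)))

lemma isAddable_bound {μ : YoungDiagram} {c : ℕ × ℕ} (h : IsAddable μ c) :
    c.1 ≤ μ.card ∧ c.2 ≤ μ.card := by
  obtain ⟨hne, hls⟩ := h
  constructor
  · have : c.1 ≤ μ.colLen c.2 := by
      by_contra hlt
      push_neg at hlt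
      have : (c.1 - 1, c.2) ∈ insert c (μ : Set (ℕ × ℕ)) :=
        hls (show ((c.1 - 1, c.2) : ℕ × ℕ) ≤ c from Prod.le_def.mpr ⟨Nat.sub_le _ _, le_rfl⟩)
          (Set.mem_insert _ _)
      rcases this with h | h
      · have : c.1 - 1 ≠ c.1 := by omega
        exact this (congrArg Prod.fst h)
      · have : c.1 - 1 < μ.colLen c.2 := YoungDiagram.mem_iff_lt_colLen.mp h
        omega
    calc c.1 ≤ μ.colLen c.2 := this
      _ = (μ.col c.2).card := μ.colLen_eq_card
      _ ≤ μ.card := Finset.card_le_card (Finset.filter_subset _ _)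
  · have : c.2 ≤ μ.rowLen c.1 := by
      by_contra hlt
      push_neg at hlt
      have : (c.1, c.2 - 1) ∈ insert c (μ : Set (ℕ × ℕ)) :=
        hls (show ((c.1, c.2 - 1) : ℕ × ℕ) ≤ c from Prod.le_def.mpr ⟨le_rfl, Nat.sub_le _ _⟩)
          (Set.mem_insert _ _)
      rcases this with h | h
      · have : c.2 - 1 ≠ c.2 := by omega
        exact this (congrArg Prod.snd h)
      · have : c.2 - 1 < μ.rowLen c.1 := YoungDiagram.mem_iff_lt_rowLen.mp h
        omega
    calc c.2 ≤ μ.rowLen c.1 := this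
      _ = (μ.row c.1).card := μ.rowLen_eq_card
      _ ≤ μ.card := Finset.card_le_card (Finset.filter_subset _ _)

/-- The finitely many addable cells. -/
noncomputable def addables (μ : YoungDiagram) : Finset (ℕ × ℕ) :=
  (Finset.range (μ.card + 1) ×ˢ Finset.range (μ.card + 1)).filter (IsAddable μ)

lemma mem_addables {μ : YoungDiagram} {c : ℕ × ℕ} :
    c ∈ addables μ ↔ IsAddable μ c := by
  simp only [addables, Finset.mem_filter, Finset.mem_product, Finset.mem_range]
  constructor
  · tauto
  · intro h
    have := isAddable_bound h
    exact ⟨⟨by omega, by omega⟩, h⟩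

/-- Insert an addable cell (junk value `μ` if not addable). -/
noncomputable def insY (μ : YoungDiagram) (c : ℕ × ℕ) : YoungDiagram :=
  if hc : IsAddable μ c then
    ⟨insert c μ.cells, by
      rw [Finset.coe_insert]
      exact hc.2⟩
  else μ

lemma mem_insY {μ : YoungDiagram} {c : ℕ × ℕ} (hc : IsAddable μ c) {x : ℕ × ℕ} :
    x ∈ insY μ c ↔ x = c ∨ x ∈ μ := by
  rw [insY, dif_pos hc]
  change x ∈ insert c μ.cells ↔ _
  rw [Finset.mem_insert, YoungDiagram.mem_cells]

lemma cells_insY {μ : YoungDiagram} {c : ℕ × ℕ} (hc : IsAddable μ c) :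
    (insY μ c).cells = insert c μ.cells := by
  rw [insY, dif_pos hc]

lemma card_insY {μ : YoungDiagram} {c : ℕ × ℕ} (hc : IsAddable μ c) :
    (insY μ c).card = μ.card + 1 := by
  show (insY μ c).cells.card = _
  rw [cells_insY hc, Finset.card_insert_of_notMem]
  exact fun h => hc.1 (YoungDiagram.mem_cells _ |>.mp h)

lemma mem_corners_iff_rowLen {μ : YoungDiagram} {i j : ℕ} :
    (i, j) ∈ corners μ ↔ μ.rowLen i = j + 1 ∧ μ.rowLen (i + 1) ≤ j := by
  rw [mem_corners]
  have h1 : ((i, j) : ℕ × ℕ) ∈ μ ↔ j < μ.rowLen i := YoungDiagram.mem_iff_lt_rowLen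
  have h2 : ((i + 1, j) : ℕ × ℕ) ∈ μ ↔ j < μ.rowLen (i + 1) := YoungDiagram.mem_iff_lt_rowLen
  have h3 : ((i, j + 1) : ℕ × ℕ) ∈ μ ↔ j + 1 < μ.rowLen i := YoungDiagram.mem_iff_lt_rowLen
  simp only [h1, h2, h3]
  omega

lemma isAddable_iff {μ : YoungDiagram} {i j : ℕ} :
    IsAddable μ (i, j) ↔ j = μ.rowLen i ∧ (i = 0 ∨ μ.rowLen i < μ.rowLen (i - 1)) := by
  constructor
  · rintro ⟨hne, hls⟩
    have hji : μ.rowLen i ≤ j := by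
      by_contra h
      exact hne (YoungDiagram.mem_iff_lt_rowLen.mpr (by omega))
    have hj : j = μ.rowLen i := by
      by_contra h
      have hj1 : 1 ≤ j := by omega
      have : ((i, j - 1) : ℕ × ℕ) ∈ insert ((i, j) : ℕ × ℕ) (μ : Set (ℕ × ℕ)) :=
        hls (show ((i, j - 1) : ℕ × ℕ) ≤ (i, j) from Prod.le_def.mpr ⟨le_rfl, Nat.sub_le _ _⟩)
          (Set.mem_insert _ _)
      rcases this with h' | h'
      · have := congrArg Prod.snd h'
        simp only at this
        omega
      · have := YoungDiagram.mem_iff_lt_rowLen.mp h'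
        omega
    refine ⟨hj, ?_⟩
    rcases Nat.eq_zero_or_pos i with h0 | h0
    · exact Or.inl h0
    · right
      have : ((i - 1, j) : ℕ × ℕ) ∈ insert ((i, j) : ℕ × ℕ) (μ : Set (ℕ × ℕ)) :=
        hls (show ((i - 1, j) : ℕ × ℕ) ≤ (i, j) from Prod.le_def.mpr ⟨Nat.sub_le _ _, le_rfl⟩)
          (Set.mem_insert _ _)
      rcases this with h' | h'
      · have := congrArg Prod.fst h'
        simp only at this
        omega
      · have := YoungDiagram.mem_iff_lt_rowLen.mp h'
        omega
  · rintro ⟨rfl, hcond⟩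
    constructor
    · intro h
      exact absurd (YoungDiagram.mem_iff_lt_rowLen.mp h) (lt_irrefl _)
    · intro a b hba ha
      rcases ha with ha | ha
      · -- a = (i, rowLen i)
        by_cases hbc : b = ((i, μ.rowLen i) : ℕ × ℕ)
        · exact Or.inl hbc
        · right
          subst ha
          rcases Prod.le_def.mp hba with ⟨hb1, hb2⟩
          show b ∈ μ
          have : b = (b.1, b.2) := rfl
          rw [this, YoungDiagram.mem_iff_lt_rowLen]
          rcases lt_or_eq_of_le hb2 with h2 | h2
          · calc b.2 < μ.rowLen i := h2
              _ ≤ μ.rowLen b.1 := μ.rowLen_anti _ _ hb1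
          · have hb1' : b.1 < i := by
              rcases lt_or_eq_of_le hb1 with h1 | h1
              · exact h1
              · exact absurd (Prod.ext_iff.mpr ⟨h1, h2⟩) hbc
            rcases hcond with h0 | hlt
            · omega
            · calc b.2 = μ.rowLen i := h2
                _ < μ.rowLen (i - 1) := hlt
                _ ≤ μ.rowLen b.1 := μ.rowLen_anti _ _ (by omega)
      · exact Or.inr (μ.isLowerSet hba ha)

lemma colLen_le_card (μ : YoungDiagram) : μ.colLen 0 ≤ μ.card := by
  rw [YoungDiagram.colLen_eq_card]
  exact Finset.card_le_card (Finset.filter_subset _ _)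

lemma lt_colLen_of_rowLen_pos {μ : YoungDiagram} {i : ℕ} (h : 0 < μ.rowLen i) :
    i < μ.colLen 0 :=
  YoungDiagram.mem_iff_lt_colLen.mp (YoungDiagram.mem_iff_lt_rowLen.mpr h)

/-- Rows containing a removable corner. -/
noncomputable def Rrows (μ : YoungDiagram) : Finset ℕ :=
  (Finset.range (μ.card + 1)).filter (fun i => μ.rowLen (i + 1) < μ.rowLen i)

/-- Rows where a cell may be added. -/
noncomputable def Arows (μ : YoungDiagram) : Finset ℕ :=
  (Finset.range (μ.card + 1)).filter (fun i => i = 0 ∨ μ.rowLen i < μ.rowLen (i - 1))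

lemma corners_eq_image (μ : YoungDiagram) :
    corners μ = (Rrows μ).image (fun i => (i, μ.rowLen i - 1)) := by
  ext ⟨i, j⟩
  rw [mem_corners_iff_rowLen]
  simp only [Finset.mem_image, Rrows, Finset.mem_filter, Finset.mem_range]
  constructor
  · rintro ⟨h1, h2⟩
    refine ⟨i, ⟨?_, by omega⟩, by simp [h1]⟩
    have : i < μ.colLen 0 := lt_colLen_of_rowLen_pos (by omega)
    have := colLen_le_card μ
    omega
  · rintro ⟨k, ⟨hk1, hk2⟩, hk3⟩
    obtain ⟨rfl, rfl⟩ : k = i ∧ μ.rowLen k - 1 = j := Prod.mk.injEq .. ▸ Prod.ext_iff.mp hk3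
    omega

lemma addables_eq_image (μ : YoungDiagram) :
    addables μ = (Arows μ).image (fun i => (i, μ.rowLen i)) := by
  ext ⟨i, j⟩
  rw [mem_addables, isAddable_iff]
  simp only [Finset.mem_image, Arows, Finset.mem_filter, Finset.mem_range]
  constructor
  · rintro ⟨rfl, hcond⟩
    refine ⟨i, ⟨?_, hcond⟩, rfl⟩
    have := isAddable_bound (isAddable_iff.mpr ⟨rfl, hcond⟩ :
      IsAddable μ (i, μ.rowLen i))
    simp only at this
    omega
  · rintro ⟨k, ⟨hk1, hk2⟩, hk3⟩
    obtain ⟨rfl, rfl⟩ : k = i ∧ μ.rowLen k = j := Prod.mk.injEq .. ▸ Prod.ext_iff.mp hk3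
    exact ⟨rfl, hk2⟩

lemma Arows_eq (μ : YoungDiagram) :
    Arows μ = insert 0 ((Rrows μ).image (· + 1)) := by
  ext i
  simp only [Arows, Rrows, Finset.mem_insert, Finset.mem_image, Finset.mem_filter,
    Finset.mem_range]
  constructor
  · rintro ⟨hi, h0 | hlt⟩
    · exact Or.inl h0
    · rcases Nat.eq_zero_or_pos i with rfl | hpos
      · exact Or.inl rfl
      · exact Or.inr ⟨i - 1, ⟨by omega, by
          have : i - 1 + 1 = i := by omega
          rw [this]; exact hlt⟩, by omega⟩
  · rintro (rfl | ⟨k, ⟨hk1, hk2⟩, rfl⟩)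
    · exact ⟨by omega, Or.inl rfl⟩
    · refine ⟨?_, Or.inr (by simpa using hk2)⟩
      have : k < μ.colLen 0 := lt_colLen_of_rowLen_pos (by omega)
      have := colLen_le_card μ
      omega

lemma card_addables (μ : YoungDiagram) :
    (addables μ).card = (corners μ).card + 1 := by
  rw [addables_eq_image, corners_eq_image, Arows_eq]
  rw [Finset.card_image_of_injective _ (fun a b h => (Prod.ext_iff.mp h).1)]
  rw [Finset.card_image_of_injective _ (fun a b h => (Prod.ext_iff.mp h).1)]
  rw [Finset.card_insert_of_notMem (by simp), Finset.card_image_of_injective _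
    (fun a b h => by omega)]
noncomputable instance instFintypeSYT (μ : YoungDiagram) : Fintype (SYT μ) := by
  unfold SYT
  exact Fintype.ofFinite _

/-- The number of standard Young tableaux of shape `μ`. -/
noncomputable def fSYT (μ : YoungDiagram) : ℕ := Nat.card (SYT μ)

lemma fSYT_eq (μ : YoungDiagram) : fSYT μ = Fintype.card (SYT μ) :=
  Nat.card_eq_fintype_card

lemma fSYT_of_card_eq_zero {μ : YoungDiagram} (h : μ.card = 0) : fSYT μ = 1 := by
  have hempty : μ.cells = ∅ := Finset.card_eq_zero.mp h
  have hE : IsEmpty ↥μ.cells := by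
    rw [hempty]; exact Finset.isEmpty_coe_sort.mpr rfl
  rw [fSYT, Nat.card_eq_one_iff_unique]
  constructor
  · exact ⟨fun T T' => Subtype.ext (funext fun a => (hE.false a).elim)⟩
  · refine ⟨⟨fun a => (hE.false a).elim, ?_, ?_⟩⟩
    · constructor
      · intro a
        exact (hE.false a).elim
      · intro b
        exact absurd b.2 (by omega)
    · intro a
      exact (hE.false a).elim

lemma corner_max {μ : YoungDiagram} {c : ℕ × ℕ} (hc : c ∈ corners μ) {b : ℕ × ℕ}
    (hb : b ∈ μ) (h1 : c.1 ≤ b.1) (h2 : c.2 ≤ b.2) : b = c := by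
  rw [mem_corners] at hc
  have hb' : (b.1, b.2) ∈ μ := by simpa using hb
  rcases lt_or_eq_of_le h1 with h1 | h1
  · exact absurd (μ.up_left_mem h1 h2 hb') hc.2.1
  · rcases lt_or_eq_of_le h2 with h2 | h2
    · exact absurd (μ.up_left_mem h1.le h2 hb') hc.2.2
    · exact Prod.ext_iff.mpr ⟨h1.symm, h2.symm⟩

/-- The cell of a SYT carrying the largest entry. -/
noncomputable def topCell {μ : YoungDiagram} (hn : μ.card ≠ 0) (T : SYT μ) : ↥μ.cells :=
  (Equiv.ofBijective T.1 T.2.1).symm ⟨μ.card - 1, by omega⟩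

lemma apply_topCell {μ : YoungDiagram} (hn : μ.card ≠ 0) (T : SYT μ) :
    T.1 (topCell hn T) = ⟨μ.card - 1, by omega⟩ :=
  (Equiv.ofBijective T.1 T.2.1).apply_symm_apply _

lemma topCell_mem_corners {μ : YoungDiagram} (hn : μ.card ≠ 0) (T : SYT μ) :
    (topCell hn T : ℕ × ℕ) ∈ corners μ := by
  set a0 := topCell hn T with ha0
  rw [mem_corners]
  refine ⟨(μ.mem_cells _).mp a0.2, ?_, ?_⟩
  · intro hmem
    set b : ↥μ.cells := ⟨((a0 : ℕ × ℕ).1 + 1, (a0 : ℕ × ℕ).2), (μ.mem_cells _).mpr hmem⟩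
    have hne : a0 ≠ b := by
      intro h
      have := congrArg (fun z : ↥μ.cells => (z : ℕ × ℕ).1) h
      simp only [b] at this
      omega
    have hlt := T.2.2 a0 b (by simp [b]) (by simp [b]) hne
    rw [apply_topCell hn T, Fin.lt_def] at hlt
    have := (T.1 b).2
    simp only at hlt
    omega
  · intro hmem
    set b : ↥μ.cells := ⟨((a0 : ℕ × ℕ).1, (a0 : ℕ × ℕ).2 + 1), (μ.mem_cells _).mpr hmem⟩
    have hne : a0 ≠ b := by
      intro h
      have := congrArg (fun z : ↥μ.cells => (z : ℕ × ℕ).2) h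
      simp only [b] at this
      omega
    have hlt := T.2.2 a0 b (by simp [b]) (by simp [b]) hne
    rw [apply_topCell hn T, Fin.lt_def] at hlt
    have := (T.1 b).2
    simp only at hlt
    omega

/-- The filling function obtained by adding the maximal entry at corner `c`. -/
noncomputable def addTopFun {μ : YoungDiagram} (c : ℕ × ℕ) (hc : c ∈ corners μ)
    (S : SYT (eraseY μ c)) (x : ↥μ.cells) : Fin μ.card :=
  if h : (x : ℕ × ℕ) = c then ⟨μ.card - 1, by have := card_pos_of_corner hc; omega⟩
  else
    Fin.castLE (le_of_eq_of_le (card_eraseY hc) (Nat.sub_le _ _))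
      (S.1 ⟨(x : ℕ × ℕ), by
        rw [YoungDiagram.mem_cells, mem_eraseY hc]
        exact ⟨(μ.mem_cells _).mp x.2, h⟩⟩)

lemma addTopFun_val_top {μ : YoungDiagram} {c : ℕ × ℕ} (hc : c ∈ corners μ)
    (S : SYT (eraseY μ c)) {x : ↥μ.cells} (h : (x : ℕ × ℕ) = c) :
    (addTopFun c hc S x : ℕ) = μ.card - 1 := by
  rw [addTopFun, dif_pos h]

lemma addTopFun_val_lt {μ : YoungDiagram} {c : ℕ × ℕ} (hc : c ∈ corners μ)
    (S : SYT (eraseY μ c)) {x : ↥μ.cells} (h : (x : ℕ × ℕ) ≠ c) :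
    (addTopFun c hc S x : ℕ) < μ.card - 1 := by
  rw [addTopFun, dif_neg h]
  simp only [Fin.coe_castLE]
  exact lt_of_lt_of_eq (S.1 _).2 (card_eraseY hc)

lemma addTopFun_val_eq {μ : YoungDiagram} {c : ℕ × ℕ} (hc : c ∈ corners μ)
    (S : SYT (eraseY μ c)) {x : ↥μ.cells} (h : (x : ℕ × ℕ) ≠ c)
    (hx' : (x : ℕ × ℕ) ∈ (eraseY μ c).cells) :
    (addTopFun c hc S x : ℕ) = (S.1 ⟨(x : ℕ × ℕ), hx'⟩ : ℕ) := by
  rw [addTopFun, dif_neg h]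
  simp only [Fin.coe_castLE]

lemma mem_cells_eraseY {μ : YoungDiagram} {c : ℕ × ℕ} (hc : c ∈ corners μ) {x : ℕ × ℕ}
    (hx : x ∈ μ) (hxc : x ≠ c) : x ∈ (eraseY μ c).cells := by
  rw [YoungDiagram.mem_cells, mem_eraseY hc]
  exact ⟨hx, hxc⟩

/-- Adding the maximal entry at a corner gives a SYT of the bigger shape. -/
noncomputable def addTop {μ : YoungDiagram} (c : ℕ × ℕ) (hc : c ∈ corners μ)
    (S : SYT (eraseY μ c)) : SYT μ := by
  have hpos := card_pos_of_corner hc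
  refine ⟨addTopFun c hc S, ?_, ?_⟩
  · -- bijective
    rw [Fintype.bijective_iff_injective_and_card]
    refine ⟨?_, by simp [Fintype.card_coe]⟩
    intro x y hxy
    by_cases hx : (x : ℕ × ℕ) = c <;> by_cases hy : (y : ℕ × ℕ) = c
    · exact Subtype.ext (hx.trans hy.symm)
    · have h1 := addTopFun_val_top hc S hx
      have h2 := addTopFun_val_lt hc S hy
      rw [hxy] at h1
      omega
    · have h1 := addTopFun_val_top hc S hy
      have h2 := addTopFun_val_lt hc S hx
      rw [hxy] at h2
      omega
    · have hx' := mem_cells_eraseY hc ((μ.mem_cells _).mp x.2) hx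
      have hy' := mem_cells_eraseY hc ((μ.mem_cells _).mp y.2) hy
      have h1 := addTopFun_val_eq hc S hx hx'
      have h2 := addTopFun_val_eq hc S hy hy'
      rw [hxy, h2] at h1
      have := S.2.1.1 (Fin.ext h1.symm : S.1 ⟨_, hx'⟩ = S.1 ⟨_, hy'⟩)
      exact Subtype.ext (congrArg (fun z : ↥((eraseY μ c).cells) => (z : ℕ × ℕ)) this)
  · -- monotone
    intro a b h1 h2 hne
    rw [Fin.lt_def]
    by_cases hb : (b : ℕ × ℕ) = c
    · have ha : (a : ℕ × ℕ) ≠ c := fun h => hne (Subtype.ext (h.trans hb.symm))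
      rw [addTopFun_val_top hc S hb]
      exact addTopFun_val_lt hc S ha
    · by_cases ha : (a : ℕ × ℕ) = c
      · exfalso
        apply hb
        exact corner_max hc ((μ.mem_cells _).mp b.2) (ha ▸ h1) (ha ▸ h2)
      · have ha' := mem_cells_eraseY hc ((μ.mem_cells _).mp a.2) ha
        have hb' := mem_cells_eraseY hc ((μ.mem_cells _).mp b.2) hb
        rw [addTopFun_val_eq hc S ha ha', addTopFun_val_eq hc S hb hb']
        have hne' : (⟨(a : ℕ × ℕ), ha'⟩ : ↥((eraseY μ c).cells)) ≠ ⟨(b : ℕ × ℕ), hb'⟩ := by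
          intro h
          exact hne (Subtype.ext (congrArg (fun z : ↥((eraseY μ c).cells) => (z : ℕ × ℕ)) h))
        exact S.2.2 ⟨_, ha'⟩ ⟨_, hb'⟩ h1 h2 hne'

lemma cellmem_of_eraseY {μ : YoungDiagram} {c : ℕ × ℕ} (hc : c ∈ corners μ) {x : ℕ × ℕ}
    (hx : x ∈ (eraseY μ c).cells) : x ∈ μ.cells ∧ x ≠ c := by
  rw [cells_eraseY hc] at hx
  exact ⟨(Finset.mem_erase.mp hx).2, (Finset.mem_erase.mp hx).1⟩

lemma addTop_sigma_injective (μ : YoungDiagram) :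
    Function.Injective
      (fun p : Σ c : ↥(corners μ), SYT (eraseY μ c.1) => addTop p.1.1 p.1.2 p.2) := by
  rintro ⟨⟨c, hc⟩, S⟩ ⟨⟨c', hc'⟩, S'⟩ h
  simp only at h
  have hfun := congrArg Subtype.val h
  have hpos := card_pos_of_corner hc
  have hcc : c = c' := by
    by_contra hne
    set x : ↥μ.cells := ⟨c, (μ.mem_cells _).mpr (mem_corners.mp hc).1⟩ with hx
    have h1 : (addTopFun c hc S x : ℕ) = μ.card - 1 := addTopFun_val_top hc S rfl
    have h2 : (addTopFun c' hc' S' x : ℕ) < μ.card - 1 := addTopFun_val_lt hc' S' hne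
    have h3 : (addTopFun c hc S x : ℕ) = (addTopFun c' hc' S' x : ℕ) :=
      congrArg Fin.val (congrFun hfun x)
    omega
  subst hcc
  have hSS : S = S' := by
    apply Subtype.ext
    funext a
    apply Fin.ext
    obtain ⟨haμ, hac⟩ := cellmem_of_eraseY hc a.2
    set x : ↥μ.cells := ⟨(a : ℕ × ℕ), haμ⟩ with hxdef
    have hx' : (x : ℕ × ℕ) ∈ (eraseY μ c).cells := a.2
    have h3 : (addTopFun c hc S x : ℕ) = (addTopFun c hc' S' x : ℕ) :=
      congrArg Fin.val (congrFun hfun x)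
    calc (S.1 a : ℕ) = (addTopFun c hc S x : ℕ) := (addTopFun_val_eq hc S hac hx').symm
      _ = (addTopFun c hc' S' x : ℕ) := h3
      _ = (S'.1 a : ℕ) := addTopFun_val_eq hc' S' hac hx'
  subst hSS
  rfl

lemma addTop_sigma_surjective {μ : YoungDiagram} (hn : μ.card ≠ 0) :
    Function.Surjective
      (fun p : Σ c : ↥(corners μ), SYT (eraseY μ c.1) => addTop p.1.1 p.1.2 p.2) := by
  intro T
  have hc := topCell_mem_corners hn T
  set c : ℕ × ℕ := (topCell hn T : ℕ × ℕ) with hcdef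
  have hcard : (eraseY μ c).card = μ.card - 1 := card_eraseY hc
  have memμ : ∀ a : ↥((eraseY μ c).cells), (a : ℕ × ℕ) ∈ μ.cells :=
    fun a => (cellmem_of_eraseY hc a.2).1
  have nec : ∀ a : ↥((eraseY μ c).cells), (a : ℕ × ℕ) ≠ c :=
    fun a => (cellmem_of_eraseY hc a.2).2
  have hval : ∀ a : ↥((eraseY μ c).cells),
      (T.1 ⟨(a : ℕ × ℕ), memμ a⟩ : ℕ) < (eraseY μ c).card := by
    intro a
    rw [hcard]
    have h2 := (T.1 ⟨(a : ℕ × ℕ), memμ a⟩).2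
    have hne : (T.1 ⟨(a : ℕ × ℕ), memμ a⟩ : ℕ) ≠ μ.card - 1 := by
      intro heq
      have heq2 : T.1 ⟨(a : ℕ × ℕ), memμ a⟩ = T.1 (topCell hn T) := by
        rw [apply_topCell hn T]
        exact Fin.ext heq
      have := T.2.1.1 heq2
      exact nec a (congrArg (fun z : ↥μ.cells => (z : ℕ × ℕ)) this)
    omega
  refine ⟨⟨⟨c, hc⟩, ⟨fun a => ⟨(T.1 ⟨(a : ℕ × ℕ), memμ a⟩ : ℕ), hval a⟩, ?_, ?_⟩⟩, ?_⟩
  · rw [Fintype.bijective_iff_injective_and_card]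
    refine ⟨?_, by simp [Fintype.card_coe]⟩
    intro a b hab
    have h0 := congrArg Fin.val hab
    have h1 : T.1 ⟨(a : ℕ × ℕ), memμ a⟩ = T.1 ⟨(b : ℕ × ℕ), memμ b⟩ := Fin.ext h0
    have := T.2.1.1 h1
    exact Subtype.ext (congrArg (fun z : ↥μ.cells => (z : ℕ × ℕ)) this)
  · intro a b h1 h2 hne
    rw [Fin.lt_def]
    have hne' : (⟨(a : ℕ × ℕ), memμ a⟩ : ↥μ.cells) ≠ ⟨(b : ℕ × ℕ), memμ b⟩ := by
      intro h
      exact hne (Subtype.ext (congrArg (fun z : ↥μ.cells => (z : ℕ × ℕ)) h))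
    exact T.2.2 _ _ h1 h2 hne'
  · apply Subtype.ext
    funext x
    apply Fin.ext
    show (addTopFun c hc _ x : ℕ) = (T.1 x : ℕ)
    by_cases hx : (x : ℕ × ℕ) = c
    · rw [addTopFun_val_top hc _ hx]
      have hxtop : x = topCell hn T := Subtype.ext hx
      rw [hxtop, apply_topCell hn T]
    · rw [addTopFun_val_eq hc _ hx (mem_cells_eraseY hc ((μ.mem_cells _).mp x.2) hx)]

lemma f_branch {μ : YoungDiagram} (hn : μ.card ≠ 0) :
    fSYT μ = ∑ c ∈ corners μ, fSYT (eraseY μ c) := by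
  have hbij : Function.Bijective (fun p : Σ c : ↥(corners μ), SYT (eraseY μ c.1) =>
      addTop p.1.1 p.1.2 p.2) := ⟨addTop_sigma_injective μ, addTop_sigma_surjective hn⟩
  rw [fSYT_eq, ← Fintype.card_of_bijective hbij, Fintype.card_sigma]
  rw [← Finset.sum_coe_sort (corners μ) (fun c => fSYT (eraseY μ c))]
  exact Finset.sum_congr rfl fun c _ => (fSYT_eq _).symm

lemma yd_ext {μ ν : YoungDiagram} (h : ∀ x : ℕ × ℕ, x ∈ μ ↔ x ∈ ν) : μ = ν :=
  SetLike.ext h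

lemma corner_insY {μ : YoungDiagram} {c : ℕ × ℕ} (hc : IsAddable μ c) :
    c ∈ corners (insY μ c) := by
  rw [mem_corners]
  refine ⟨(mem_insY hc).mpr (Or.inl rfl), ?_, ?_⟩
  · intro h
    rw [mem_insY hc] at h
    rcases h with h | h
    · have := congrArg Prod.fst h
      simp only at this
      omega
    · exact hc.1 (μ.up_left_mem (Nat.le_succ _) le_rfl (by simpa using h))
  · intro h
    rw [mem_insY hc] at h
    rcases h with h | h
    · have := congrArg Prod.snd h
      simp only at this
      omega
    · exact hc.1 (μ.up_left_mem le_rfl (Nat.le_succ _) (by simpa using h))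

lemma eraseY_insY {μ : YoungDiagram} {c : ℕ × ℕ} (hc : IsAddable μ c) :
    eraseY (insY μ c) c = μ := by
  apply yd_ext
  intro x
  rw [mem_eraseY (corner_insY hc), mem_insY hc]
  constructor
  · rintro ⟨h | h, hx⟩
    · exact absurd h hx
    · exact h
  · intro h
    exact ⟨Or.inr h, fun he => hc.1 (he ▸ h)⟩

lemma isAddable_eraseY {μ : YoungDiagram} {c : ℕ × ℕ} (hc : c ∈ corners μ) :
    IsAddable (eraseY μ c) c := by
  constructor
  · rw [mem_eraseY hc]
    tauto
  · have hset : insert c ((eraseY μ c : Set (ℕ × ℕ))) = (μ : Set (ℕ × ℕ)) := by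
      ext x
      simp only [Set.mem_insert_iff, SetLike.mem_coe, mem_eraseY hc]
      constructor
      · rintro (rfl | ⟨h, _⟩)
        · exact (mem_corners.mp hc).1
        · exact h
      · intro h
        by_cases hx : x = c
        · exact Or.inl hx
        · exact Or.inr ⟨h, hx⟩
    rw [hset]
    exact μ.isLowerSet

lemma insY_eraseY {μ : YoungDiagram} {c : ℕ × ℕ} (hc : c ∈ corners μ) :
    insY (eraseY μ c) c = μ := by
  apply yd_ext
  intro x
  rw [mem_insY (isAddable_eraseY hc), mem_eraseY hc]
  constructor
  · rintro (rfl | ⟨h, _⟩)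
    · exact (mem_corners.mp hc).1
    · exact h
  · intro h
    by_cases hx : x = c
    · exact Or.inl hx
    · exact Or.inr ⟨h, hx⟩

lemma corner_of_corner_insY {μ : YoungDiagram} {c c' : ℕ × ℕ} (hc : IsAddable μ c)
    (hc' : c' ∈ corners (insY μ c)) (hne : c' ≠ c) : c' ∈ corners μ := by
  rw [mem_corners] at hc' ⊢
  obtain ⟨h1, h2, h3⟩ := hc'
  rw [mem_insY hc] at h1
  rcases h1 with h1 | h1
  · exact absurd h1 hne
  · exact ⟨h1, fun h => h2 ((mem_insY hc).mpr (Or.inr h)),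
      fun h => h3 ((mem_insY hc).mpr (Or.inr h))⟩

lemma swap_erase_ins {μ : YoungDiagram} {c c' : ℕ × ℕ} (hc : IsAddable μ c)
    (hc' : c' ∈ corners (insY μ c)) (hne : c' ≠ c) :
    IsAddable (eraseY μ c') c ∧ eraseY (insY μ c) c' = insY (eraseY μ c') c := by
  have hcorν : c' ∈ corners μ := corner_of_corner_insY hc hc' hne
  have hcnotμ : c ∉ eraseY μ c' := by
    rw [mem_eraseY hcorν]
    intro ⟨h, _⟩
    exact hc.1 h
  have hsets : insert c ((eraseY μ c' : Set (ℕ × ℕ))) = (eraseY (insY μ c) c' : Set (ℕ × ℕ)) := by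
    ext x
    simp only [Set.mem_insert_iff, SetLike.mem_coe, mem_eraseY hcorν, mem_eraseY hc',
      mem_insY hc]
    constructor
    · rintro (rfl | ⟨h, hx⟩)
      · exact ⟨Or.inl rfl, hne.symm⟩
      · exact ⟨Or.inr h, hx⟩
    · rintro ⟨h | h, hx⟩
      · exact Or.inl h
      · exact Or.inr ⟨h, hx⟩
  have haddc : IsAddable (eraseY μ c') c := by
    refine ⟨hcnotμ, ?_⟩
    rw [hsets]
    exact (eraseY (insY μ c) c').isLowerSet
  refine ⟨haddc, ?_⟩
  apply yd_ext
  intro x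
  rw [mem_eraseY hc', mem_insY hc, mem_insY haddc, mem_eraseY hcorν]
  constructor
  · rintro ⟨h | h, hx⟩
    · exact Or.inl h
    · exact Or.inr ⟨h, hx⟩
  · rintro (rfl | ⟨h, hx⟩)
    · exact ⟨Or.inl rfl, hne.symm⟩
    · exact ⟨Or.inr h, hx⟩

lemma swap_ins_erase {μ : YoungDiagram} {c c' : ℕ × ℕ} (hc' : c' ∈ corners μ)
    (hc : IsAddable (eraseY μ c') c) (hne : c ≠ c') :
    IsAddable μ c ∧ c' ∈ corners (insY μ c) := by
  have hcnot : c ∉ μ := by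
    intro h
    exact hc.1 ((mem_eraseY hc').mpr ⟨h, hne⟩)
  have haddμ : IsAddable μ c := by
    refine ⟨hcnot, ?_⟩
    intro x y hyx hx
    rcases hx with hx | hx
    · -- x = c
      subst hx
      have := hc.2 hyx (Set.mem_insert _ _)
      rcases this with h | h
      · exact Or.inl h
      · exact Or.inr ((mem_eraseY hc').mp h).1
    · exact Or.inr (μ.isLowerSet hyx hx)
  refine ⟨haddμ, ?_⟩
  rw [mem_corners]
  have hc'μ := (mem_corners.mp hc').1
  refine ⟨(mem_insY haddμ).mpr (Or.inr hc'μ), ?_, ?_⟩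
  · intro h
    rw [mem_insY haddμ] at h
    rcases h with h | h
    · -- c = (c'.1 + 1, c'.2): impossible since c is addable to eraseY μ c'
      have hle : c' ≤ c := by
        rw [← h]
        exact Prod.le_def.mpr ⟨Nat.le_succ _, le_rfl⟩
      have := hc.2 hle (Set.mem_insert _ _)
      rcases this with h2 | h2
      · rw [← h2] at h
        have := congrArg Prod.fst h
        simp only at this
        omega
      · exact ((mem_eraseY hc').mp h2).2 rfl
    · exact (mem_corners.mp hc').2.1 h
  · intro h
    rw [mem_insY haddμ] at h
    rcases h with h | h
    · have hle : c' ≤ c := by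
        rw [← h]
        exact Prod.le_def.mpr ⟨le_rfl, Nat.le_succ _⟩
      have := hc.2 hle (Set.mem_insert _ _)
      rcases this with h2 | h2
      · rw [← h2] at h
        have := congrArg Prod.snd h
        simp only at this
        omega
      · exact ((mem_eraseY hc').mp h2).2 rfl
    · exact (mem_corners.mp hc').2.2 h

lemma up_down : ∀ (n : ℕ) (ν : YoungDiagram), ν.card = n →
    ∑ c ∈ addables ν, fSYT (insY ν c) = (ν.card + 1) * fSYT ν := by
  intro n
  induction n using Nat.strong_induction_on with
  | _ n IH =>
    intro ν hν
    have key : ∀ c ∈ addables ν, fSYT (insY ν c) =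
        fSYT ν + ∑ c' ∈ (corners (insY ν c)).erase c, fSYT (eraseY (insY ν c) c') := by
      intro c hcadd
      rw [mem_addables] at hcadd
      rw [f_branch (μ := insY ν c) (by rw [card_insY hcadd]; omega)]
      rw [← Finset.add_sum_erase _ _ (corner_insY hcadd), eraseY_insY hcadd]
    rw [Finset.sum_congr rfl key, Finset.sum_add_distrib, Finset.sum_const, smul_eq_mul]
    have hD : ∑ c ∈ addables ν, ∑ c' ∈ (corners (insY ν c)).erase c,
          fSYT (eraseY (insY ν c) c')
        = ∑ c' ∈ corners ν, ∑ c ∈ (addables (eraseY ν c')).erase c',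
          fSYT (insY (eraseY ν c') c) := by
      rw [Finset.sum_sigma', Finset.sum_sigma']
      refine Finset.sum_bij' (fun p _ => (⟨p.2, p.1⟩ : Σ _ : ℕ × ℕ, ℕ × ℕ))
        (fun p _ => (⟨p.2, p.1⟩ : Σ _ : ℕ × ℕ, ℕ × ℕ)) ?_ ?_ ?_ ?_ ?_
      · rintro ⟨c, c'⟩ hp
        rw [Finset.mem_sigma] at hp
        obtain ⟨hc, hc'⟩ := hp
        rw [Finset.mem_erase] at hc'
        rw [mem_addables] at hc
        obtain ⟨hne, hcor⟩ := hc'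
        show (⟨c', c⟩ : Σ _ : ℕ × ℕ, ℕ × ℕ) ∈
          (corners ν).sigma (fun c'' => (addables (eraseY ν c'')).erase c'')
        rw [Finset.mem_sigma, Finset.mem_erase]
        have h1 := corner_of_corner_insY hc hcor hne
        have h2 := (swap_erase_ins hc hcor hne).1
        refine ⟨h1, ?_, mem_addables.mpr h2⟩
        intro h
        have h' : c = c' := h
        apply hc.1
        show c ∈ ν
        rw [h']
        exact (mem_corners.mp h1).1
      · rintro ⟨c', c⟩ hp
        rw [Finset.mem_sigma] at hp
        obtain ⟨hc', hc⟩ := hp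
        rw [Finset.mem_erase] at hc
        obtain ⟨hne, hadd⟩ := hc
        rw [mem_addables] at hadd
        show (⟨c, c'⟩ : Σ _ : ℕ × ℕ, ℕ × ℕ) ∈
          (addables ν).sigma (fun c'' => (corners (insY ν c'')).erase c'')
        rw [Finset.mem_sigma, Finset.mem_erase]
        have h2 := swap_ins_erase hc' hadd hne
        refine ⟨mem_addables.mpr h2.1, ?_, h2.2⟩
        intro h
        have h' : c' = c := h
        exact hne h'.symm
      · rintro ⟨c, c'⟩ _
        rfl
      · rintro ⟨c', c⟩ _
        rfl
      · rintro ⟨c, c'⟩ hp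
        rw [Finset.mem_sigma] at hp
        obtain ⟨hc, hc'⟩ := hp
        rw [Finset.mem_erase] at hc'
        rw [mem_addables] at hc
        obtain ⟨hne, hcor⟩ := hc'
        show fSYT (eraseY (insY ν c) c') = fSYT (insY (eraseY ν c') c)
        rw [(swap_erase_ins hc hcor hne).2]
    rw [hD]
    have inner : ∀ c' ∈ corners ν,
        fSYT ν + ∑ c ∈ (addables (eraseY ν c')).erase c', fSYT (insY (eraseY ν c') c)
          = ν.card * fSYT (eraseY ν c') := by
      intro c' hc'
      have hadd : c' ∈ addables (eraseY ν c') := mem_addables.mpr (isAddable_eraseY hc')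
      have hins : insY (eraseY ν c') c' = ν := insY_eraseY hc'
      have hpos := card_pos_of_corner hc'
      have hcards : (eraseY ν c').card = n - 1 := by rw [card_eraseY hc']; omega
      have hU := IH (n - 1) (by omega) (eraseY ν c') hcards
      calc fSYT ν + ∑ c ∈ (addables (eraseY ν c')).erase c', fSYT (insY (eraseY ν c') c)
          = ∑ c ∈ addables (eraseY ν c'), fSYT (insY (eraseY ν c') c) := by
            rw [← Finset.add_sum_erase _ _ hadd, hins]
        _ = ((eraseY ν c').card + 1) * fSYT (eraseY ν c') := hU
        _ = ν.card * fSYT (eraseY ν c') := by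
            rw [card_eraseY hc']
            congr 1
            omega
    have hDr : ∑ c' ∈ corners ν, ∑ c ∈ (addables (eraseY ν c')).erase c',
          fSYT (insY (eraseY ν c') c) + (corners ν).card * fSYT ν
        = ν.card * fSYT ν := by
      rcases Nat.eq_zero_or_pos ν.card with h0 | hposν
      · have hcor : corners ν = ∅ := by
          rw [Finset.eq_empty_iff_forall_notMem]
          intro c hcmem
          have := card_pos_of_corner hcmem
          omega
        rw [hcor, h0]
        simp
      · calc ∑ c' ∈ corners ν, ∑ c ∈ (addables (eraseY ν c')).erase c',
              fSYT (insY (eraseY ν c') c) + (corners ν).card * fSYT ν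
            = ∑ c' ∈ corners ν, (fSYT ν + ∑ c ∈ (addables (eraseY ν c')).erase c',
              fSYT (insY (eraseY ν c') c)) := by
              rw [Finset.sum_add_distrib, Finset.sum_const, smul_eq_mul]
              ring
          _ = ∑ c' ∈ corners ν, ν.card * fSYT (eraseY ν c') := Finset.sum_congr rfl inner
          _ = ν.card * ∑ c' ∈ corners ν, fSYT (eraseY ν c') := by rw [Finset.mul_sum]
          _ = ν.card * fSYT ν := by rw [← f_branch (by omega)]
    rw [card_addables]
    have hA := fSYT ν
    -- goal: ((corners ν).card + 1) * fSYT ν + D' = (ν.card + 1) * fSYT ν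
    set A := fSYT ν
    set r := (corners ν).card
    set D' := ∑ c' ∈ corners ν, ∑ c ∈ (addables (eraseY ν c')).erase c',
      fSYT (insY (eraseY ν c') c)
    have : (r + 1) * A + D' = A + (D' + r * A) := by ring
    rw [this, hDr]
    ring

lemma cell_lt_card {μ : YoungDiagram} {x : ℕ × ℕ} (hx : x ∈ μ) :
    x.1 < μ.card ∧ x.2 < μ.card := by
  have hx' : (x.1, x.2) ∈ μ := by simpa using hx
  constructor
  · have h1 : x.1 < μ.colLen x.2 := YoungDiagram.mem_iff_lt_colLen.mp hx'
    have h2 : μ.colLen x.2 ≤ μ.card := by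
      rw [YoungDiagram.colLen_eq_card]
      exact Finset.card_le_card (Finset.filter_subset _ _)
    omega
  · have h1 : x.2 < μ.rowLen x.1 := YoungDiagram.mem_iff_lt_rowLen.mp hx'
    have h2 : μ.rowLen x.1 ≤ μ.card := by
      rw [YoungDiagram.rowLen_eq_card]
      exact Finset.card_le_card (Finset.filter_subset _ _)
    omega

lemma finite_diagrams (n : ℕ) : {μ : YoungDiagram | μ.card = n}.Finite := by
  apply Set.Finite.of_finite_image (f := fun μ => μ.cells)
  · apply Set.Finite.subset
      (((Finset.range n ×ˢ Finset.range n).powerset : Finset (Finset (ℕ × ℕ)))).finite_toSet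
    rintro s ⟨μ, hμ, rfl⟩
    rw [Finset.mem_coe, Finset.mem_powerset]
    intro x hx
    have hb := cell_lt_card ((μ.mem_cells x).mp hx)
    have hcard : μ.card = n := hμ
    rw [Finset.mem_product, Finset.mem_range, Finset.mem_range]
    omega
  · intro μ _ ν _ h
    have h' : μ.cells = ν.cells := h
    exact yd_ext fun x => by
      rw [← YoungDiagram.mem_cells, ← YoungDiagram.mem_cells, h']

/-- The finset of Young diagrams with `n` cells. -/
noncomputable def Fndiag (n : ℕ) : Finset YoungDiagram := (finite_diagrams n).toFinset

lemma mem_Fndiag {n : ℕ} {μ : YoungDiagram} : μ ∈ Fndiag n ↔ μ.card = n :=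
  Set.Finite.mem_toFinset _

lemma bot_card : (⊥ : YoungDiagram).card = 0 := by
  show (⊥ : YoungDiagram).cells.card = 0
  rw [YoungDiagram.cells_bot]
  rfl

lemma eq_bot_of_card_zero {μ : YoungDiagram} (h : μ.card = 0) : μ = ⊥ := by
  have hcells : μ.cells = ∅ := Finset.card_eq_zero.mp h
  apply yd_ext
  intro x
  constructor
  · intro hx
    have := (μ.mem_cells x).mpr hx
    rw [hcells] at this
    exact absurd this (Finset.notMem_empty x)
  · intro hx
    exact absurd hx (YoungDiagram.notMem_bot x)

lemma main_sum : ∀ n : ℕ, ∑ μ ∈ Fndiag n, fSYT μ ^ 2 = n.factorial := by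
  intro n
  induction n with
  | zero =>
    have h1 : Fndiag 0 = {⊥} := by
      ext μ
      rw [mem_Fndiag, Finset.mem_singleton]
      constructor
      · exact eq_bot_of_card_zero
      · rintro rfl
        exact bot_card
    rw [h1, Finset.sum_singleton, fSYT_of_card_eq_zero bot_card]
    rfl
  | succ n IH =>
    have step : ∀ μ ∈ Fndiag (n + 1),
        fSYT μ ^ 2 = ∑ c ∈ corners μ, fSYT (eraseY μ c) * fSYT μ := by
      intro μ hμ
      rw [mem_Fndiag] at hμ
      rw [pow_two, ← Finset.sum_mul]
      congr 1
      exact f_branch (by omega)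
    calc ∑ μ ∈ Fndiag (n + 1), fSYT μ ^ 2
        = ∑ μ ∈ Fndiag (n + 1), ∑ c ∈ corners μ, fSYT (eraseY μ c) * fSYT μ :=
          Finset.sum_congr rfl step
      _ = ∑ p ∈ (Fndiag (n + 1)).sigma (fun μ => corners μ),
            fSYT (eraseY p.1 p.2) * fSYT p.1 := Finset.sum_sigma' _ _ _
      _ = ∑ p ∈ (Fndiag n).sigma (fun ν => addables ν),
            fSYT p.1 * fSYT (insY p.1 p.2) := by
          refine Finset.sum_bij' (fun p _ => (⟨eraseY p.1 p.2, p.2⟩ : Σ _ : YoungDiagram, ℕ × ℕ))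
            (fun p _ => (⟨insY p.1 p.2, p.2⟩ : Σ _ : YoungDiagram, ℕ × ℕ)) ?_ ?_ ?_ ?_ ?_
          · rintro ⟨μ, c⟩ hp
            rw [Finset.mem_sigma] at hp
            obtain ⟨hμ, hc⟩ := hp
            rw [mem_Fndiag] at hμ
            rw [Finset.mem_sigma, mem_Fndiag]
            constructor
            · rw [card_eraseY hc, hμ]
              omega
            · exact mem_addables.mpr (isAddable_eraseY hc)
          · rintro ⟨ν, c⟩ hp
            rw [Finset.mem_sigma] at hp
            obtain ⟨hν, hc⟩ := hp
            rw [mem_Fndiag] at hν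
            rw [mem_addables] at hc
            rw [Finset.mem_sigma, mem_Fndiag]
            constructor
            · rw [card_insY hc, hν]
            · exact corner_insY hc
          · rintro ⟨μ, c⟩ hp
            rw [Finset.mem_sigma] at hp
            have hc := hp.2
            show (⟨insY (eraseY μ c) c, c⟩ : Σ _ : YoungDiagram, ℕ × ℕ) = ⟨μ, c⟩
            rw [insY_eraseY hc]
          · rintro ⟨ν, c⟩ hp
            rw [Finset.mem_sigma] at hp
            have hc := mem_addables.mp hp.2
            show (⟨eraseY (insY ν c) c, c⟩ : Σ _ : YoungDiagram, ℕ × ℕ) = ⟨ν, c⟩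
            rw [eraseY_insY hc]
          · rintro ⟨μ, c⟩ hp
            rw [Finset.mem_sigma] at hp
            have hc := hp.2
            show fSYT (eraseY μ c) * fSYT μ = fSYT (eraseY μ c) * fSYT (insY (eraseY μ c) c)
            rw [insY_eraseY hc]
      _ = ∑ ν ∈ Fndiag n, ∑ c ∈ addables ν, fSYT ν * fSYT (insY ν c) := by
          rw [Finset.sum_sigma']
      _ = ∑ ν ∈ Fndiag n, (n + 1) * fSYT ν ^ 2 := by
          apply Finset.sum_congr rfl
          intro ν hν
          rw [mem_Fndiag] at hν
          rw [← Finset.mul_sum, up_down ν.card ν rfl, hν, pow_two]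
          ring
      _ = (n + 1) * ∑ ν ∈ Fndiag n, fSYT ν ^ 2 := by rw [Finset.mul_sum]
      _ = (n + 1) * n.factorial := by rw [IH]
      _ = (n + 1).factorial := (Nat.factorial_succ n).symm

end RSKaux

/-- RSK: `S_n` is in bijection with pairs of standard Young tableaux of the same shape
with `n` cells; consequently `n! = ∑_{λ ⊢ n} (f^λ)²`. -/
theorem stmt_16 (n : ℕ) :
    Nonempty (Equiv.Perm (Fin n) ≃
      Σ μ : {μ : YoungDiagram // μ.card = n}, SYT μ.1 × SYT μ.1) ∧
      n.factorial = ∑ᶠ μ : {μ : YoungDiagram // μ.card = n}, (Nat.card (SYT μ.1)) ^ 2 := by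
  haveI : Fintype {μ : YoungDiagram // μ.card = n} :=
    Fintype.subtype (RSKaux.Fndiag n) (fun μ => RSKaux.mem_Fndiag)
  have hsub : ∑ μ : {μ : YoungDiagram // μ.card = n}, RSKaux.fSYT μ.1 ^ 2 = n.factorial := by
    rw [← RSKaux.main_sum n]
    exact (Finset.sum_subtype (RSKaux.Fndiag n) (fun μ => RSKaux.mem_Fndiag)
      (fun μ => RSKaux.fSYT μ ^ 2)).symm
  constructor
  · refine ⟨Fintype.equivOfCardEq ?_⟩
    rw [Fintype.card_perm, Fintype.card_fin, Fintype.card_sigma, ← hsub]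
    apply Finset.sum_congr rfl
    intro μ _
    rw [Fintype.card_prod, ← RSKaux.fSYT_eq, pow_two]
  · rw [finsum_eq_sum_of_fintype, ← hsub]
    rfl
end

section
/- For x ∈ [0,1]^ℕ with pairwise distinct coordinates, declare position n 'special' inductively: position 1 is always special, and setting d_n = #{special positions among 1,...,n}, position n+1 is special iff t_{n+1} ≤ d_n, where t_{n+1} = #{k ≤ n+1 : x_k < x_{n+1}} (with t_1 = 1 using 1-based ranking). Then position n is special if and only if x_n < x_1 or n = 1. -/
open scoped Classical

/-- The special positions (defined inductively: position `0` is special, and position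
`n+1` is special iff `t_{n+2} ≤ d_{n+1}`, where `t` is the 1-based rank and `d` counts
special positions so far) are exactly position `0` and the positions `n` with
`x n < x 0`. -/
theorem stmt_18 (x : ℕ → ℝ) (hx : ∀ i, x i ∈ Set.Icc (0 : ℝ) 1)
    (hinj : Function.Injective x)
    (special : ℕ → Prop)
    (h0 : special 0)
    (hsucc : ∀ n : ℕ, special (n + 1) ↔
      1 + ((Finset.range (n + 1)).filter fun k => x k < x (n + 1)).card ≤
        ((Finset.range (n + 1)).filter fun k => special k).card) :
    ∀ n : ℕ, special n ↔ (x n < x 0 ∨ n = 0) := by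
  intro n
  induction n using Nat.strong_induction_on with
  | _ n ih =>
    match n with
    | 0 => simp [h0]
    | Nat.succ m =>
      have hd : ((Finset.range (m+1)).filter fun k => special k)
          = (Finset.range (m+1)).filter fun k => x k < x 0 ∨ k = 0 := by
        apply Finset.filter_congr
        intro k hk
        exact ih k (Finset.mem_range.mp hk)
      set L := (Finset.range (m+1)).filter fun k => x k < x (m+1) with hL
      set S := (Finset.range (m+1)).filter fun k => x k < x 0 ∨ k = 0 with hS
      have h0S : 0 ∈ S := by
        simp [hS, Finset.mem_filter]
      have hne : x (m+1) ≠ x 0 := fun h => by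
        exact Nat.succ_ne_zero m (hinj h)
      rcases hne.lt_or_gt with h | h
      · -- x (m+1) < x 0 : special
        have hsub : L ⊆ S.erase 0 := by
          intro k hk
          simp only [hL, Finset.mem_filter, Finset.mem_range] at hk
          have hk0 : k ≠ 0 := by
            rintro rfl
            exact absurd (hk.2.trans h) (lt_irrefl _)
          refine Finset.mem_erase.mpr ⟨hk0, ?_⟩
          simp only [hS, Finset.mem_filter, Finset.mem_range]
          exact ⟨hk.1, Or.inl (hk.2.trans h)⟩
        have hcard : L.card ≤ S.card - 1 := by
          calc L.card ≤ (S.erase 0).card := Finset.card_le_card hsub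
          _ = S.card - 1 := Finset.card_erase_of_mem h0S
        have hSpos : 1 ≤ S.card := Finset.card_pos.mpr ⟨0, h0S⟩
        have : 1 + L.card ≤ S.card := by omega
        rw [hsucc m, hd]
        simp only [← hL, ← hS]
        constructor
        · intro _; exact Or.inl h
        · intro _; exact this
      · -- x 0 < x (m+1) : not special
        have hsub : S ⊆ L := by
          intro k hk
          simp only [hS, Finset.mem_filter, Finset.mem_range] at hk
          simp only [hL, Finset.mem_filter, Finset.mem_range]
          refine ⟨hk.1, ?_⟩
          rcases hk.2 with hk2 | rfl
          · exact hk2.trans h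
          · exact h
        have hcard : S.card ≤ L.card := Finset.card_le_card hsub
        rw [hsucc m, hd]
        simp only [← hL, ← hS]
        constructor
        · intro hle; omega
        · rintro (hlt | hm)
          · exact absurd hlt (not_lt.mpr h.le)
          · exact absurd hm (Nat.succ_ne_zero m)
end
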